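/- arXiv:2305.00200 — 2 statements merged into one kernel-verified Lean document; each statement's English description precedes it below -/
import Mathlib

section
/- The function H is p-coercive: there exists a constant C > 0 such that for every real x > s, |x|^p ≤ C·(1 + H(x)). -/
/-!
With `t = (x - s) / (x̄ - s)`, weighted AM–GM gives `H ≥ 0`, so `(p - 1) t ^ (1 + p) ≤ H + 2p`.
On the other hand `|x| ≤ (|s| + x̄ - s) (1 + t)` and `(1 + t) ^ p ≤ 2 ^ p (1 + t ^ (1 + p))`,
so `|x| ^ p` is controlled by `1 + t ^ (1 + p)`, hence by `1 + H`.
-/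

open Real

/-- The penalty function `H` from the paper's cost function, with parameters
`p > 2`, `s`, and reference point `x̄ = xb > s`. Powers are real powers. -/
noncomputable def Hpen (p s xb x : ℝ) : ℝ :=
  (p - 1) * ((x - s) / (xb - s)) ^ (1 + p) +
    (p + 1) * ((x - s) / (xb - s)) ^ (1 - p) - 2 * p

/-- Weighted AM–GM: the weights `(p - 1) / (2p)` and `(p + 1) / (2p)` make the geometric mean of
`t ^ (1 + p)` and `t ^ (1 - p)` equal to `1`. -/
lemma two_mul_le_rpow_one_add_add_rpow_one_sub {p t : ℝ} (hp : 1 ≤ p) (ht : 0 < t) :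
    2 * p ≤ (p - 1) * t ^ (1 + p) + (p + 1) * t ^ (1 - p) := by
  have hp0 : 0 < 2 * p := by linarith
  have hgm : (t ^ (1 + p)) ^ ((p - 1) / (2 * p)) * (t ^ (1 - p)) ^ ((p + 1) / (2 * p)) = 1 := by
    rw [← rpow_mul ht.le, ← rpow_mul ht.le, ← rpow_add ht]
    convert rpow_zero t using 2
    field_simp
    ring
  have amgm := geom_mean_le_arith_mean2_weighted (w₁ := (p - 1) / (2 * p))
    (w₂ := (p + 1) / (2 * p)) (div_nonneg (by linarith) hp0.le) (div_nonneg (by linarith) hp0.le)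
    (rpow_nonneg ht.le (1 + p)) (rpow_nonneg ht.le (1 - p))
    (by field_simp; ring)
  rw [hgm] at amgm
  calc 2 * p = 2 * p * 1 := (mul_one _).symm
    _ ≤ 2 * p * ((p - 1) / (2 * p) * t ^ (1 + p) + (p + 1) / (2 * p) * t ^ (1 - p)) :=
      mul_le_mul_of_nonneg_left amgm hp0.le
    _ = (p - 1) * t ^ (1 + p) + (p + 1) * t ^ (1 - p) := by field_simp

lemma one_add_rpow_le_two_rpow_mul {p t : ℝ} (hp : 0 ≤ p) (ht : 0 ≤ t) :
    (1 + t) ^ p ≤ 2 ^ p * (1 + t ^ (1 + p)) := by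
  have htp : 0 ≤ t ^ (1 + p) := rpow_nonneg ht _
  rcases le_total t 1 with ht1 | ht1
  · calc (1 + t) ^ p ≤ 2 ^ p := rpow_le_rpow (by linarith) (by linarith) hp
      _ ≤ 2 ^ p * (1 + t ^ (1 + p)) :=
        le_mul_of_one_le_right (by positivity) (by linarith)
  · calc (1 + t) ^ p ≤ (2 * t) ^ p := rpow_le_rpow (by linarith) (by linarith) hp
      _ = 2 ^ p * t ^ p := mul_rpow zero_le_two ht
      _ ≤ 2 ^ p * (1 + t ^ (1 + p)) := by
        gcongr
        linarith [rpow_le_rpow_of_exponent_le ht1 (by linarith : p ≤ 1 + p)]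

lemma abs_le_mul_one_add_div {s xb x : ℝ} (hxb : s < xb) (hx : s ≤ x) :
    |x| ≤ (|s| + (xb - s)) * (1 + (x - s) / (xb - s)) := by
  have hdist := abs_sub_abs_le_abs_sub x s
  rw [abs_of_nonneg (sub_nonneg.2 hx)] at hdist
  have hx_sub : x - s = (xb - s) * ((x - s) / (xb - s)) := by field_simp [(sub_pos.2 hxb).ne']
  have ht : 0 ≤ (x - s) / (xb - s) := div_nonneg (by linarith) (by linarith)
  nlinarith [abs_nonneg s]

lemma Hpen_nonneg {p s xb x : ℝ} (hp : 1 ≤ p) (hxb : s < xb) (hx : s < x) :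
    0 ≤ Hpen p s xb x :=
  sub_nonneg.2 (two_mul_le_rpow_one_add_add_rpow_one_sub hp (div_pos (by linarith) (by linarith)))

lemma one_add_rpow_le_mul_one_add_Hpen {p s xb x : ℝ} (hp : 1 < p) (hxb : s < xb) (hx : s < x) :
    1 + ((x - s) / (xb - s)) ^ (1 + p) ≤ (3 * p - 1) / (p - 1) * (1 + Hpen p s xb x) := by
  set t := (x - s) / (xb - s)
  have ht : 0 < t := div_pos (by linarith) (by linarith)
  have hH := Hpen_nonneg hp.le hxb hx
  have hdrop : 0 ≤ (p + 1) * t ^ (1 - p) := mul_nonneg (by linarith) (rpow_nonneg ht.le _)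
  have hHt : Hpen p s xb x = (p - 1) * t ^ (1 + p) + (p + 1) * t ^ (1 - p) - 2 * p := rfl
  rw [div_mul_eq_mul_div, le_div_iff₀ (by linarith)]
  nlinarith

/-- `H` is `p`-coercive: there is `C > 0` with `|x| ^ p ≤ C * (1 + H x)` for
all `x > s`. -/
theorem stmt_3 (p s xb : ℝ) (hp : 2 < p) (hxb : s < xb) :
    ∃ C : ℝ, 0 < C ∧ ∀ x : ℝ, s < x → |x| ^ p ≤ C * (1 + Hpen p s xb x) := by
  set A := |s| + (xb - s)
  have hA : 0 < A := by positivity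
  refine ⟨(2 * A) ^ p * ((3 * p - 1) / (p - 1)),
    mul_pos (by positivity) (div_pos (by linarith) (by linarith)), fun x hx => ?_⟩
  have ht : 0 ≤ (x - s) / (xb - s) := div_nonneg (by linarith) (by linarith)
  calc |x| ^ p ≤ (A * (1 + (x - s) / (xb - s))) ^ p :=
        rpow_le_rpow (abs_nonneg x) (abs_le_mul_one_add_div hxb hx.le) (by linarith)
    _ = A ^ p * (1 + (x - s) / (xb - s)) ^ p := mul_rpow hA.le (by positivity)
    _ ≤ A ^ p * (2 ^ p * (1 + ((x - s) / (xb - s)) ^ (1 + p))) := by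
        gcongr
        exact one_add_rpow_le_two_rpow_mul (by linarith) ht
    _ ≤ A ^ p * (2 ^ p * ((3 * p - 1) / (p - 1) * (1 + Hpen p s xb x))) := by
        gcongr
        exact one_add_rpow_le_mul_one_add_Hpen (by linarith) hxb hx
    _ = (2 * A) ^ p * ((3 * p - 1) / (p - 1)) * (1 + Hpen p s xb x) := by
        rw [mul_rpow zero_le_two hA.le]
        ring
end

section
/- Let p > 2, D > 0, s ∈ ℝ and c ∈ ℝ. Define z = ( D^p·c/(4(p²−1)) + (1/2)·√( (D^p·c/(2(p²−1)))² + 4·D^(2p) ) )^(1/p) and β* = s + z. Then z > 0 (so β* > s), z satisfies the quadratic equation in z^p: z^(2p) − z^p · D^p·c/(2(p²−1)) − D^(2p) = 0, and consequently (p²−1)·( (z/D)^p − (z/D)^(−p) ) = c/2. -/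
/-!
With `a = Dᵖ c / (2(p² - 1))`, the number `zᵖ` is the larger root `a/2 + √(a² + 4D²ᵖ)/2` of
`x² - a x - D²ᵖ`, which is positive because `√(a² + 4D²ᵖ) > |a|`. Dividing that quadratic by
`zᵖ Dᵖ` gives `(z/D)ᵖ - (z/D)⁻ᵖ = a / Dᵖ = c / (2(p² - 1))`.
-/

open Real

noncomputable def quadPosRoot (a q : ℝ) : ℝ := a / 2 + (1 / 2) * √(a ^ 2 + 4 * q)

lemma abs_lt_sqrt_sq_add (a : ℝ) {q : ℝ} (hq : 0 < q) : |a| < √(a ^ 2 + 4 * q) := by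
  rw [← sqrt_sq_eq_abs]
  exact sqrt_lt_sqrt (sq_nonneg a) (by linarith)

lemma quadPosRoot_pos (a : ℝ) {q : ℝ} (hq : 0 < q) : 0 < quadPosRoot a q := by
  have := (neg_le_abs a).trans_lt (abs_lt_sqrt_sq_add a hq)
  unfold quadPosRoot
  linarith

lemma quadPosRoot_sq_sub (a : ℝ) {q : ℝ} (hq : 0 ≤ q) :
    quadPosRoot a q ^ 2 - quadPosRoot a q * a - q = 0 := by
  have hsq : √(a ^ 2 + 4 * q) ^ 2 = a ^ 2 + 4 * q := sq_sqrt (by positivity)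
  unfold quadPosRoot
  linear_combination (1 / 4 : ℝ) * hsq

lemma rpow_two_mul {x : ℝ} (hx : 0 ≤ x) (y : ℝ) : x ^ (2 * y) = (x ^ y) ^ 2 := by
  rw [mul_comm, rpow_mul hx, rpow_two]

lemma div_sub_div_eq_of_sq_sub_mul_sub_sq {x y a : ℝ} (hx : x ≠ 0) (hy : y ≠ 0)
    (h : x ^ 2 - x * a - y ^ 2 = 0) : x / y - y / x = a / y := by
  field_simp
  linear_combination h

/-- Algebraic core of the paper's "Analytic Formula for the Optimal
Characteristic": the explicit root `z` is positive, solves the quadratic in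
`z ^ p`, and satisfies the first-order condition. -/
theorem stmt_6 (p D s c : ℝ) (hp : 2 < p) (hD : 0 < D)
    (z : ℝ)
    (hz : z = (D ^ p * c / (4 * (p ^ 2 - 1)) +
        (1 / 2) * Real.sqrt ((D ^ p * c / (2 * (p ^ 2 - 1))) ^ 2 +
          4 * D ^ (2 * p))) ^ (1 / p))
    (βstar : ℝ) (hβ : βstar = s + z) :
    0 < z ∧ s < βstar ∧
      z ^ (2 * p) - z ^ p * (D ^ p * c / (2 * (p ^ 2 - 1))) - D ^ (2 * p) = 0 ∧
      (p ^ 2 - 1) * ((z / D) ^ p - (z / D) ^ (-p)) = c / 2 := by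
  set a := D ^ p * c / (2 * (p ^ 2 - 1)) with ha
  have hp2 : p ^ 2 - 1 ≠ 0 := by nlinarith
  have hDp : 0 < D ^ p := rpow_pos_of_pos hD p
  have hD2p : 0 < D ^ (2 * p) := rpow_pos_of_pos hD _
  have hB := quadPosRoot_pos a hD2p
  have hzB : z = quadPosRoot a (D ^ (2 * p)) ^ p⁻¹ := by
    have half_a : D ^ p * c / (4 * (p ^ 2 - 1)) = a / 2 := by
      rw [ha, div_div]
      ring
    rw [hz, quadPosRoot, half_a, one_div p]
  have hz0 : 0 < z := hzB ▸ rpow_pos_of_pos hB _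
  have hzp : z ^ p = quadPosRoot a (D ^ (2 * p)) := by
    rw [hzB, rpow_inv_rpow hB.le (by positivity)]
  have hquad : z ^ (2 * p) - z ^ p * a - D ^ (2 * p) = 0 := by
    rw [rpow_two_mul hz0.le, hzp]
    exact quadPosRoot_sq_sub a hD2p.le
  refine ⟨hz0, by linarith, hquad, ?_⟩
  have hfoc : z ^ p / D ^ p - D ^ p / z ^ p = a / D ^ p := by
    rw [rpow_two_mul hz0.le, rpow_two_mul hD.le] at hquad
    exact div_sub_div_eq_of_sq_sub_mul_sub_sq (rpow_pos_of_pos hz0 p).ne' hDp.ne' hquad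
  rw [rpow_neg (div_nonneg hz0.le hD.le), div_rpow hz0.le hD.le, inv_div, hfoc, ha]
  field_simp
end
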